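/- For real symmetric positive semi-definite matrices A and B, the operator norm of A^{1/2} − B^{1/2} squared is at most the operator norm of A − B, i.e., ‖A^{1/2} − B^{1/2}‖² ≤ ‖A − B‖. -/

import Mathlib

/-!
Write `C = P - Q` with `P = A^{1/2}`, `Q = B^{1/2}`. Since `A - B = P C + C Q`, an eigenvector `v`
of `C` with eigenvalue `μ` gives `⟪(A - B) v, v⟫ = μ (⟪P v, v⟫ + ⟪Q v, v⟫)`, while
`μ ‖v‖² = ⟪P v, v⟫ - ⟪Q v, v⟫`. As `P` and `Q` are positive, `|⟪P v, v⟫ - ⟪Q v, v⟫|` is at most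
`⟪P v, v⟫ + ⟪Q v, v⟫`, whence `μ² ≤ ‖A - B‖`; and the norm of the symmetric operator `C` is the
largest `|μ|`.
-/

open Classical Matrix

/-- The positive semidefinite square root of a real matrix (junk value `0` if not PSD). -/
noncomputable def psdSqrt {n : ℕ} (A : Matrix (Fin n) (Fin n) ℝ) : Matrix (Fin n) (Fin n) ℝ :=
  if h : A.PosSemidef then
    (h.1.eigenvectorUnitary : Matrix (Fin n) (Fin n) ℝ) *
      diagonal ((↑) ∘ (√·) ∘ h.1.eigenvalues) * (star h.1.eigenvectorUnitary : Matrix (Fin n) (Fin n) ℝ)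
  else 0

/-- The spectral (operator) norm of a square real matrix, with respect to the
Euclidean norm on `ℝ^n`. -/
noncomputable def opNorm {n : ℕ} (M : Matrix (Fin n) (Fin n) ℝ) : ℝ :=
  ‖Matrix.toEuclideanCLM (𝕜 := ℝ) M‖

open Module.End
open scoped ComplexOrder MatrixOrder RealInnerProductSpace

namespace ContinuousLinearMap

theorem norm_le_of_forall_hasEigenvalue {𝕜 E : Type*} [RCLike 𝕜] [NormedAddCommGroup E]
    [InnerProductSpace 𝕜 E] [FiniteDimensional 𝕜 E] {T : E →L[𝕜] E}
    (hT : (T : E →ₗ[𝕜] E).IsSymmetric) {r : ℝ} (hr : 0 ≤ r)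
    (h : ∀ μ, HasEigenvalue (T : E →ₗ[𝕜] E) μ → ‖μ‖ ≤ r) : ‖T‖ ≤ r := by
  have := FiniteDimensional.complete 𝕜 E
  have hρ : spectralRadius 𝕜 T ≤ ENNReal.ofReal r := by
    refine iSup₂_le fun μ hμ => (ENNReal.le_ofReal_iff_toReal_le ENNReal.coe_ne_top hr).mpr ?_
    rw [spectrum_eq, ← hasEigenvalue_iff_mem_spectrum] at hμ
    simpa using h μ hμ
  rw [T.spectralRadius_eq_nnnorm (T.isSelfAdjoint_iff_isSymmetric.mpr hT),
    ENNReal.le_ofReal_iff_toReal_le ENNReal.coe_ne_top hr] at hρ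
  simpa using hρ

variable {E : Type*} [NormedAddCommGroup E] [InnerProductSpace ℝ E]

theorem abs_inner_apply_self_le (T : E →L[ℝ] E) (v : E) : |⟪T v, v⟫| ≤ ‖T‖ * ‖v‖ ^ 2 :=
  calc |⟪T v, v⟫| ≤ ‖T v‖ * ‖v‖ := abs_real_inner_le_norm _ _
    _ ≤ ‖T‖ * ‖v‖ * ‖v‖ := by gcongr; exact T.le_opNorm v
    _ = ‖T‖ * ‖v‖ ^ 2 := by ring

theorem inner_mul_self_sub_mul_self_apply {P Q : E →L[ℝ] E} (hP : (P : E →ₗ[ℝ] E).IsSymmetric)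
    (hQ : (Q : E →ₗ[ℝ] E).IsSymmetric) {μ : ℝ} {v : E} (hv : (P - Q) v = μ • v) :
    ⟪(P * P - Q * Q) v, v⟫ = μ * (⟪P v, v⟫ + ⟪Q v, v⟫) := by
  have hC : ((P - Q : E →L[ℝ] E) : E →ₗ[ℝ] E).IsSymmetric := by simpa using hP.sub hQ
  have hPQ : P * P - Q * Q = P * (P - Q) + (P - Q) * Q := by noncomm_ring
  calc ⟪(P * P - Q * Q) v, v⟫ = ⟪P ((P - Q) v), v⟫ + ⟪(P - Q) (Q v), v⟫ := by
        rw [hPQ, _root_.add_apply, inner_add_left]; rfl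
    _ = ⟪(P - Q) v, P v⟫ + ⟪Q v, (P - Q) v⟫ := congrArg₂ (· + ·) (hP _ _) (hC _ _)
    _ = μ * (⟪P v, v⟫ + ⟪Q v, v⟫) := by
        rw [hv, real_inner_smul_left, real_inner_smul_right, real_inner_comm (P v)]
        ring

theorem IsPositive.sq_le_norm_mul_self_sub_mul_self {P Q : E →L[ℝ] E} (hP : P.IsPositive)
    (hQ : Q.IsPositive) {μ : ℝ} (hμ : HasEigenvalue ((P - Q : E →L[ℝ] E) : E →ₗ[ℝ] E) μ) :
    μ ^ 2 ≤ ‖P * P - Q * Q‖ := by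
  obtain ⟨v, hv⟩ := hμ.exists_hasEigenvector
  have hv0 : 0 < ‖v‖ ^ 2 := by have := hv.2; positivity
  have hPv : 0 ≤ ⟪P v, v⟫ := by simpa using hP.inner_nonneg_left v
  have hQv : 0 ≤ ⟪Q v, v⟫ := by simpa using hQ.inner_nonneg_left v
  have happ : (P - Q) v = μ • v := hv.apply_eq_smul
  have hdiff : μ * ‖v‖ ^ 2 = ⟪P v, v⟫ - ⟪Q v, v⟫ := by
    rw [← real_inner_self_eq_norm_sq, ← real_inner_smul_left, ← happ, _root_.sub_apply,
      inner_sub_left]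
  have habs : |μ| * ‖v‖ ^ 2 ≤ ⟪P v, v⟫ + ⟪Q v, v⟫ := by
    rw [← abs_of_pos hv0, ← abs_mul, hdiff, abs_le]
    constructor <;> linarith
  have hsum := inner_mul_self_sub_mul_self_apply hP.isSymmetric hQ.isSymmetric happ
  refine le_of_mul_le_mul_right ?_ (pow_pos hv0 2)
  calc μ ^ 2 * (‖v‖ ^ 2) ^ 2 = |μ| * (|μ| * ‖v‖ ^ 2) * ‖v‖ ^ 2 := by rw [← sq_abs]; ring
    _ ≤ |μ| * (⟪P v, v⟫ + ⟪Q v, v⟫) * ‖v‖ ^ 2 := by gcongr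
    _ = |⟪(P * P - Q * Q) v, v⟫| * ‖v‖ ^ 2 := by
        rw [hsum, abs_mul, abs_of_nonneg (add_nonneg hPv hQv)]
    _ ≤ ‖P * P - Q * Q‖ * ‖v‖ ^ 2 * ‖v‖ ^ 2 :=
        mul_le_mul_of_nonneg_right (abs_inner_apply_self_le _ _) hv0.le
    _ = ‖P * P - Q * Q‖ * (‖v‖ ^ 2) ^ 2 := by ring

theorem IsPositive.norm_sub_sq_le_norm_mul_self_sub_mul_self [FiniteDimensional ℝ E]
    {P Q : E →L[ℝ] E} (hP : P.IsPositive) (hQ : Q.IsPositive) :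
    ‖P - Q‖ ^ 2 ≤ ‖P * P - Q * Q‖ := by
  refine (Real.le_sqrt (norm_nonneg _) (norm_nonneg _)).mp ?_
  refine norm_le_of_forall_hasEigenvalue (by simpa using hP.isSymmetric.sub hQ.isSymmetric)
    (Real.sqrt_nonneg _) fun μ hμ => ?_
  exact Real.abs_le_sqrt (hP.sq_le_norm_mul_self_sub_mul_self hQ hμ)

end ContinuousLinearMap

theorem Matrix.PosSemidef.isPositive_toEuclideanCLM {𝕜 n : Type*} [RCLike 𝕜] [Fintype n]
    [DecidableEq n] {A : Matrix n n 𝕜} (hA : A.PosSemidef) :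
    (toEuclideanCLM (𝕜 := 𝕜) A).IsPositive := by
  rw [← ContinuousLinearMap.isPositive_toLinearMap_iff]
  exact Matrix.isPositive_toEuclideanLin_iff.mpr hA

theorem psdSqrt_eq_sqrt {n : ℕ} {A : Matrix (Fin n) (Fin n) ℝ} (hA : A.PosSemidef) :
    psdSqrt A = CFC.sqrt A := by
  rw [psdSqrt, dif_pos hA, CFC.sqrt_eq_cfc, cfc_nnreal_eq_real _ A, hA.isHermitian.cfc_eq,
    IsHermitian.cfc, Unitary.conjStarAlgAut_apply]
  congr 3
  funext i
  simp [hA.eigenvalues_nonneg i]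

/-- For real symmetric PSD matrices `A`, `B`:
`‖A^{1/2} − B^{1/2}‖² ≤ ‖A − B‖` in operator norm. -/
theorem opNorm_sqrt_diff_sq_le {n : ℕ}
    (A B : Matrix (Fin n) (Fin n) ℝ) (hA : A.PosSemidef) (hB : B.PosSemidef) :
    opNorm (psdSqrt A - psdSqrt B) ^ 2 ≤ opNorm (A - B) := by
  set P := toEuclideanCLM (𝕜 := ℝ) (CFC.sqrt A)
  set Q := toEuclideanCLM (𝕜 := ℝ) (CFC.sqrt B)
  have hP : P.IsPositive := (CFC.sqrt_nonneg A).posSemidef.isPositive_toEuclideanCLM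
  have hQ : Q.IsPositive := (CFC.sqrt_nonneg B).posSemidef.isPositive_toEuclideanCLM
  have hAB : toEuclideanCLM (𝕜 := ℝ) (A - B) = P * P - Q * Q := by
    rw [map_sub, ← map_mul, ← map_mul, CFC.sqrt_mul_sqrt_self A hA.nonneg,
      CFC.sqrt_mul_sqrt_self B hB.nonneg]
  have hPQ : toEuclideanCLM (𝕜 := ℝ) (psdSqrt A - psdSqrt B) = P - Q := by
    rw [psdSqrt_eq_sqrt hA, psdSqrt_eq_sqrt hB, map_sub]
  rw [opNorm, opNorm, hAB, hPQ]
  exact hP.norm_sub_sq_le_norm_mul_self_sub_mul_self hQ
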